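/- arXiv:2605.16216 — 4 statements merged into one kernel-verified Lean document; each statement's English description precedes it below -/
import Mathlib

section
/- Fix ε > 0 and constants c_h ∈ (0, 1/10) and C_h > 10. There exist constants c₀ ∈ (0, c_h] and X_min ≥ C_h, depending only on k, ε, c_h, C_h, such that the following holds. Let X ≥ X_min and α ∈ (0, 2/3] with α > exp(−c_h F(X)); write L = log(1/α). Let X' ≥ 2 and α' ∈ (0, 1], and suppose one of the following holds: (∗) α > c_h, X' ≥ α^{C_h} X, and α' ≥ α + α^{C_h}; (2) α ≤ c_h and for some j ∈ ℕ, X' ≥ X · exp(−C_h j L^{3+ε} (log L)²) and α' ≥ 2^j α; (3) α ≤ c_h, X' ≥ X · L^{−C_h}, and α' ≥ α(1 + c_h L^{−(2+ε)(1+ε)}). If α' ≤ exp(−c₀ F(X')), then α ≤ exp(−c₀ F(X)). -/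
open Real

/-- log(1+x) ≥ x/2 for 0 ≤ x ≤ 1. -/
lemma half_le_log_one_add {x : ℝ} (h0 : 0 ≤ x) (h1 : x ≤ 1) :
    x / 2 ≤ Real.log (1 + x) := by
  have hy : (0:ℝ) < 1 + x := by linarith
  have h := Real.log_le_sub_one_of_pos (x := (1+x)⁻¹) (by positivity)
  rw [Real.log_inv] at h
  have : 1 - (1+x)⁻¹ ≤ Real.log (1+x) := by linarith
  have h2 : x / 2 ≤ 1 - (1+x)⁻¹ := by
    have hinv : (1 + x) * (1 + x)⁻¹ = 1 := mul_inv_cancel₀ hy.ne'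
    rw [le_sub_iff_add_le]
    nlinarith [hinv]
  linarith

/-- Monotonicity of `G(u) = u^d / √(log (3+u))` on the region where `log(3+u) ≥ 1/(2d)`. -/
lemma Gmono {d : ℝ} (hd : 0 < d) {u v : ℝ} (hu : 0 < u)
    (hlog : 1 / (2*d) ≤ Real.log (3+u)) (huv : u ≤ v) :
    u ^ d / Real.sqrt (Real.log (3+u)) ≤ v ^ d / Real.sqrt (Real.log (3+v)) := by
  have hlogpos : ∀ x : ℝ, u ≤ x → 0 < Real.log (3+x) := by
    intro x hx
    calc (0:ℝ) < 1/(2*d) := by positivity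
    _ ≤ Real.log (3+u) := hlog
    _ ≤ Real.log (3+x) := Real.log_le_log (by linarith) (by linarith)
  set f : ℝ → ℝ := fun x => d * Real.log x - (1/2) * Real.log (Real.log (3+x)) with hf
  have hder : ∀ x : ℝ, u ≤ x → HasDerivAt f (d * x⁻¹ - (1/2) * ((3+x)⁻¹ / Real.log (3+x))) x := by
    intro x hx
    have hx0 : (0:ℝ) < x := lt_of_lt_of_le hu hx
    have h1 : HasDerivAt (fun y : ℝ => d * Real.log y) (d * x⁻¹) x :=
      (Real.hasDerivAt_log hx0.ne').const_mul d
    have h2 : HasDerivAt (fun y : ℝ => 3 + y) 1 x := (hasDerivAt_id x).const_add 3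
    have h3 : HasDerivAt (fun y : ℝ => Real.log (3 + y)) (1 / (3+x)) x :=
      h2.log (by linarith)
    have h4 : HasDerivAt (fun y : ℝ => Real.log (Real.log (3 + y)))
        ((1/(3+x)) / Real.log (3+x)) x := h3.log (hlogpos x hx).ne'
    have := h1.sub (h4.const_mul (1/2))
    exact this.congr_deriv (by ring)
  have hmono : MonotoneOn f (Set.Ici u) := by
    apply monotoneOn_of_deriv_nonneg (convex_Ici u)
    · intro x hx
      exact ((hder x hx).continuousAt).continuousWithinAt
    · intro x hx
      rw [interior_Ici] at hx
      exact ((hder x (le_of_lt hx)).differentiableAt).differentiableWithinAt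
    · intro x hx
      rw [interior_Ici] at hx
      have hx' : u ≤ x := le_of_lt hx
      rw [(hder x hx').deriv]
      have hx0 : (0:ℝ) < x := lt_of_lt_of_le hu hx'
      have hL : 1/(2*d) ≤ Real.log (3+x) :=
        hlog.trans (Real.log_le_log (by linarith) (by linarith))
      have hLpos := hlogpos x hx'
      have h5 : (3+x)⁻¹ / Real.log (3+x) ≤ (3+x)⁻¹ * (2*d) := by
        rw [div_le_iff₀ hLpos]
        rw [div_le_iff₀ (by positivity : (0:ℝ) < 2*d)] at hL
        have h6 : (0:ℝ) < (3+x)⁻¹ := by positivity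
        nlinarith [h6]
      have h7 : (3+x)⁻¹ * (2*d) ≤ x⁻¹ * (2*d) := by
        have : x⁻¹ * x = 1 := inv_mul_cancel₀ hx0.ne'
        have h8 : (3+x)⁻¹ ≤ x⁻¹ := by
          apply inv_anti₀ hx0
          linarith
        nlinarith
      nlinarith
  have hfle : f u ≤ f v := hmono Set.self_mem_Ici huv huv
  have hGexp : ∀ x : ℝ, u ≤ x →
      Real.exp (f x) = x ^ d / Real.sqrt (Real.log (3+x)) := by
    intro x hx
    have hx0 : (0:ℝ) < x := lt_of_lt_of_le hu hx
    have hLpos := hlogpos x hx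
    rw [hf]
    simp only []
    rw [Real.exp_sub]
    rw [Real.sqrt_eq_rpow]
    rw [Real.rpow_def_of_pos hx0, Real.rpow_def_of_pos hLpos]
    ring_nf
  calc u ^ d / Real.sqrt (Real.log (3+u)) = Real.exp (f u) := (hGexp u le_rfl).symm
  _ ≤ Real.exp (f v) := Real.exp_le_exp.2 hfle
  _ = v ^ d / Real.sqrt (Real.log (3+v)) := hGexp v huv

/-- Difference bound: `G t − G (t−s) ≤ 2 d s t^{d−1}`. -/
lemma Gdiff {d : ℝ} (hd : 0 < d) (hd1 : d ≤ 1) {t s : ℝ} (hs : 0 ≤ s)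
    (hst : s ≤ t / 2) (ht : 2 * Real.exp 1 ≤ t) :
    t ^ d / Real.sqrt (Real.log (3+t)) - (t - s) ^ d / Real.sqrt (Real.log (3+(t-s)))
      ≤ 2 * d * s * t ^ (d - 1) := by
  have he : (0:ℝ) < Real.exp 1 := Real.exp_pos 1
  have ht0 : (0:ℝ) < t := by nlinarith
  have hts : Real.exp 1 ≤ t - s := by nlinarith
  have hts0 : (0:ℝ) < t - s := lt_of_lt_of_le he hts
  have hlog1 : (1:ℝ) ≤ Real.log (3 + (t - s)) := by
    rw [Real.le_log_iff_exp_le (by linarith)]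
    linarith
  have hlogmono : Real.log (3 + (t-s)) ≤ Real.log (3 + t) := by
    apply Real.log_le_log (by linarith); linarith
  have hsq1 : (1:ℝ) ≤ Real.sqrt (Real.log (3 + t)) := by
    rw [show (1:ℝ) = Real.sqrt 1 from (Real.sqrt_one).symm]
    exact Real.sqrt_le_sqrt (by linarith)
  have hsqmono : Real.sqrt (Real.log (3+(t-s))) ≤ Real.sqrt (Real.log (3+t)) :=
    Real.sqrt_le_sqrt hlogmono
  have hsqpos : (0:ℝ) < Real.sqrt (Real.log (3+(t-s))) := by
    apply Real.sqrt_pos.2; linarith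
  -- step 1: G(t-s) ≥ (t-s)^d / √(log(3+t))
  have h1 : (t-s) ^ d / Real.sqrt (Real.log (3+t)) ≤
      (t-s) ^ d / Real.sqrt (Real.log (3+(t-s))) :=
    div_le_div_of_nonneg_left (Real.rpow_nonneg hts0.le d) hsqpos hsqmono
  -- step 2: Bernoulli
  have hber : t ^ d ≤ (t-s) ^ d + d * s * (t-s) ^ (d-1) := by
    have hx : (0:ℝ) ≤ s / (t - s) := by positivity
    have hfac : t = (t - s) * (1 + s / (t-s)) := by field_simp; ring
    have h2 : ((t-s) * (1 + s/(t-s))) ^ d = (t-s) ^ d * (1 + s/(t-s)) ^ d :=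
      Real.mul_rpow hts0.le (by linarith)
    have h3 : (1 + s/(t-s)) ^ d ≤ 1 + d * (s/(t-s)) :=
      rpow_one_add_le_one_add_mul_self (by linarith) hd.le hd1
    have h4 : (t-s) ^ d * (1 + s/(t-s)) ^ d ≤ (t-s) ^ d * (1 + d * (s/(t-s))) :=
      mul_le_mul_of_nonneg_left h3 (Real.rpow_nonneg hts0.le d)
    have h5 : (t-s) ^ d * (1 + d * (s/(t-s))) = (t-s) ^ d + d * s * (t-s) ^ (d-1) := by
      rw [Real.rpow_sub_one hts0.ne']
      field_simp
    calc t ^ d = ((t-s) * (1 + s/(t-s))) ^ d := by rw [← hfac]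
    _ ≤ (t-s) ^ d * (1 + d * (s/(t-s))) := le_trans (le_of_eq h2) h4
    _ = (t-s) ^ d + d * s * (t-s) ^ (d-1) := h5
  -- step 3: (t-s)^(d-1) ≤ 2 t^(d-1)
  have hp : (t-s) ^ (d-1) ≤ 2 * t ^ (d-1) := by
    have h6 : (t-s) ^ (d-1) ≤ (t/2) ^ (d-1) := by
      apply Real.rpow_le_rpow_of_nonpos (by positivity) (by linarith) (by linarith)
    have h7 : (t/2) ^ (d-1) = t ^ (d-1) / 2 ^ (d-1) :=
      Real.div_rpow ht0.le (by norm_num : (0:ℝ) ≤ 2) (d-1)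
    have h8 : (1:ℝ)/2 ≤ 2 ^ (d-1 : ℝ) := by
      rw [show (1:ℝ)/2 = 2 ^ (-1 : ℝ) by norm_num [Real.rpow_neg_one]]
      exact Real.rpow_le_rpow_of_exponent_le (by norm_num) (by linarith)
    have h9 : (0:ℝ) < 2 ^ (d-1 : ℝ) := Real.rpow_pos_of_pos (by norm_num) _
    have h10 : t ^ (d-1) / 2 ^ (d-1) ≤ t ^ (d-1) / (1/2) := by
      apply div_le_div_of_nonneg_left (Real.rpow_nonneg ht0.le _) (by norm_num) h8
    calc (t-s) ^ (d-1) ≤ (t/2) ^ (d-1) := h6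
    _ = t ^ (d-1) / 2 ^ (d-1 : ℝ) := h7
    _ ≤ t ^ (d-1) / (1/2) := h10
    _ = 2 * t ^ (d-1) := by ring
  -- combine
  have hnum : (0:ℝ) ≤ t ^ d - (t-s) ^ d := by
    have := Real.rpow_le_rpow hts0.le (by linarith : t - s ≤ t) hd.le
    linarith
  have hfinal : t ^ d / Real.sqrt (Real.log (3+t)) - (t-s) ^ d / Real.sqrt (Real.log (3+t))
      ≤ t ^ d - (t-s) ^ d := by
    rw [div_sub_div_same]
    exact div_le_self hnum hsq1
  have hpos' : (0:ℝ) ≤ d * s := by positivity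
  have hlast : d * s * (t-s) ^ (d-1) ≤ d * s * (2 * t ^ (d-1)) :=
    mul_le_mul_of_nonneg_left hp hpos'
  nlinarith [h1, hber, hfinal, hlast]

lemma ev_sq {β : ℝ} (c : ℝ) (hβ : 0 < β) (hc : 0 < c) :
    ∀ᶠ t : ℝ in Filter.atTop, (Real.log t) ^ 2 ≤ c * t ^ β := by
  have h := Asymptotics.isLittleO_iff.mp (isLittleO_log_rpow_rpow_atTop 2 hβ) hc
  filter_upwards [h, Filter.eventually_ge_atTop (1:ℝ)] with t h1 h2
  have hlog0 : 0 ≤ Real.log t := Real.log_nonneg h2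
  have ht0 : (0:ℝ) ≤ t := by linarith
  rw [Real.norm_eq_abs, Real.norm_eq_abs, abs_of_nonneg (Real.rpow_nonneg hlog0 _),
    abs_of_nonneg (Real.rpow_nonneg ht0 _)] at h1
  calc (Real.log t) ^ 2 = (Real.log t) ^ (2:ℝ) := by
        rw [show ((2:ℝ)) = ((2:ℕ):ℝ) by norm_num, Real.rpow_natCast]
  _ ≤ c * t ^ β := h1

lemma ev_log {r : ℝ} (c : ℝ) (hr : 0 < r) (hc : 0 < c) :
    ∀ᶠ t : ℝ in Filter.atTop, Real.log t ≤ c * t ^ r := by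
  have h := Asymptotics.isLittleO_iff.mp (isLittleO_log_rpow_atTop hr) hc
  filter_upwards [h, Filter.eventually_ge_atTop (0:ℝ)] with t h1 h2
  rw [Real.norm_eq_abs, Real.norm_eq_abs, abs_of_nonneg (Real.rpow_nonneg h2 _)] at h1
  exact (le_abs_self _).trans h1

/-- `F(x) = (log x)^{d_ε} / √(log(3 + log x))` with `d_ε = 1/((2+ε)(1+ε)+2)`. -/
noncomputable def Ffun (ε x : ℝ) : ℝ :=
  Real.log x ^ (1 / ((2 + ε) * (1 + ε) + 2)) / Real.sqrt (Real.log (3 + Real.log x))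

set_option maxHeartbeats 1000000 in
/-- inductive step of the density increment iteration. -/
theorem stmt4 (k : ℕ) (hk : 2 ≤ k) (ε : ℝ) (hε : 0 < ε)
    (ch Ch : ℝ) (hch : ch ∈ Set.Ioo (0 : ℝ) (1 / 10)) (hCh : 10 < Ch) :
    ∃ c₀ Xmin : ℝ, c₀ ∈ Set.Ioc (0 : ℝ) ch ∧ Ch ≤ Xmin ∧
      ∀ X : ℝ, Xmin ≤ X →
        ∀ α : ℝ, α ∈ Set.Ioc (0 : ℝ) (2 / 3) → Real.exp (-ch * Ffun ε X) < α →
          ∀ X' : ℝ, 2 ≤ X' →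
            ∀ α' : ℝ, α' ∈ Set.Ioc (0 : ℝ) 1 →
              ((ch < α ∧ α ^ Ch * X ≤ X' ∧ α + α ^ Ch ≤ α') ∨
               (α ≤ ch ∧ ∃ j : ℕ,
                  X * Real.exp (-Ch * j * Real.log (1 / α) ^ (3 + ε) *
                    Real.log (Real.log (1 / α)) ^ 2) ≤ X' ∧ 2 ^ j * α ≤ α') ∨
               (α ≤ ch ∧ X * Real.log (1 / α) ^ (-Ch) ≤ X' ∧
                  α * (1 + ch * Real.log (1 / α) ^ (-((2 + ε) * (1 + ε)))) ≤ α')) →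
              α' ≤ Real.exp (-c₀ * Ffun ε X') →
              α ≤ Real.exp (-c₀ * Ffun ε X) := by
  obtain ⟨hch0, hch10⟩ := hch
  have hCh0 : (0:ℝ) < Ch := by linarith
  set a : ℝ := (2 + ε) * (1 + ε) with ha_def
  set d : ℝ := 1 / ((2 + ε) * (1 + ε) + 2) with hd_def
  have ha2 : 2 < a := by rw [ha_def]; nlinarith
  have hapos : (0:ℝ) < a + 2 := by linarith
  have hd0 : 0 < d := by rw [hd_def]; rw [← ha_def]; positivity
  have hdval : d * (a + 2) = 1 := by rw [hd_def, ← ha_def]; field_simp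
  have hd14 : d < 1/4 := by nlinarith
  have hd1 : d ≤ 1 := by linarith
  have hda : d * a = 1 - 2 * d := by nlinarith
  set β : ℝ := 1 - d * (4 + ε) with hβ_def
  have hβ0 : 0 < β := by
    have h1 : β = d * (a - 2 - ε) := by rw [hβ_def]; nlinarith
    have h2 : 0 < a - 2 - ε := by rw [ha_def]; nlinarith
    rw [h1]; positivity
  set g₀ : ℝ := Real.log (1 + ch ^ (Ch - 1)) with hg₀_def
  have hchpow : 0 < ch ^ (Ch - 1) := Real.rpow_pos_of_pos hch0 _
  have hg₀0 : 0 < g₀ := Real.log_pos (by linarith)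
  set s₀ : ℝ := Ch * Real.log (1 / ch) with hs₀_def
  have hlogch : 0 < Real.log (1 / ch) := Real.log_pos (by rw [lt_div_iff₀ hch0]; linarith)
  have hs₀0 : 0 < s₀ := mul_pos hCh0 hlogch
  set c₀ : ℝ := min ch (g₀ / (1 + 2 * d * s₀)) with hc₀_def
  have hds₀ : (0:ℝ) < 1 + 2 * d * s₀ := by positivity
  have hc₀0 : 0 < c₀ := lt_min hch0 (by positivity)
  have hc₀ch : c₀ ≤ ch := min_le_left _ _
  have hc₀1 : c₀ ≤ 1 := hc₀ch.trans (by linarith)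
  have hc₀key : c₀ * (2 * d * s₀) ≤ g₀ := by
    have h1 : c₀ ≤ g₀ / (1 + 2 * d * s₀) := min_le_right _ _
    rw [le_div_iff₀ hds₀] at h1
    nlinarith
  -- eventual conditions
  have hev : ∀ᶠ t : ℝ in Filter.atTop,
      (2 * Real.exp (1 / (2 * d)) ≤ t ∧ 2 * s₀ ≤ t ∧ 2 * Real.exp 1 ≤ t ∧ Ch ≤ t ∧ 1 ≤ t) ∧
      ((Real.log t) ^ 2 ≤ Real.log 2 / (2 * d * Ch) * t ^ β ∧
       (Real.log t) ^ 2 ≤ 1 / (4 * Ch) * t ^ β) ∧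
      (Real.log t ≤ ch / (4 * d * Ch) * t ^ d ∧
       Real.log t ≤ 1 / (2 * Ch) * t) := by
    have e1 := Filter.eventually_ge_atTop (2 * Real.exp (1 / (2 * d)))
    have e2 := Filter.eventually_ge_atTop (2 * s₀)
    have e3 := Filter.eventually_ge_atTop (2 * Real.exp 1)
    have e4 := Filter.eventually_ge_atTop Ch
    have e5 := Filter.eventually_ge_atTop (1:ℝ)
    have hlog2pos : (0:ℝ) < Real.log 2 := Real.log_pos (by norm_num)
    have e6 := ev_sq (β := β) (Real.log 2 / (2 * d * Ch)) hβ0 (by positivity)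
    have e7 := ev_sq (β := β) (1 / (4 * Ch)) hβ0 (by positivity)
    have e8 := ev_log (r := d) (ch / (4 * d * Ch)) hd0 (by positivity)
    have e9 := ev_log (r := 1) (1 / (2 * Ch)) one_pos (by positivity)
    filter_upwards [e1, e2, e3, e4, e5, e6, e7, e8, e9] with t h1 h2 h3 h4 h5 h6 h7 h8 h9
    rw [Real.rpow_one] at h9
    exact ⟨⟨h1, h2, h3, h4, h5⟩, ⟨h6, h7⟩, ⟨h8, h9⟩⟩
  obtain ⟨T, hT⟩ := Filter.eventually_atTop.mp hev
  have hTprop := hT T le_rfl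
  have hTCh : Ch ≤ T := hTprop.1.2.2.2.1
  refine ⟨c₀, Real.exp T, ⟨hc₀0, hc₀ch⟩, ?_, ?_⟩
  · have := Real.add_one_le_exp T
    linarith
  intro X hX α hα hαlow X' hX'2 α' hα' hcase hα'le
  obtain ⟨hα0, hα23⟩ := hα
  obtain ⟨hα'0, hα'1⟩ := hα'
  set t : ℝ := Real.log X with ht_def
  set t' : ℝ := Real.log X' with ht'_def
  have hXpos : (0:ℝ) < X := lt_of_lt_of_le (Real.exp_pos T) hX
  have hX'pos : (0:ℝ) < X' := by linarith
  have hTt : T ≤ t := by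
    rw [ht_def, show T = Real.log (Real.exp T) from (Real.log_exp T).symm]
    exact Real.log_le_log (Real.exp_pos T) hX
  obtain ⟨⟨hE1, hE2, hE3, hECh, hEt1⟩, ⟨h4, h5⟩, ⟨h6, h7⟩⟩ := hT t hTt
  have htpos : (0:ℝ) < t := by linarith
  set L : ℝ := Real.log (1 / α) with hL_def
  have hlogα : Real.log α = -L := by rw [hL_def, one_div, Real.log_inv]; ring
  have hL0 : 0 < L := Real.log_pos (by rw [lt_div_iff₀ hα0]; linarith)
  have hFX : Ffun ε X = t ^ d / Real.sqrt (Real.log (3 + t)) := by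
    unfold Ffun; rw [← hd_def, ← ht_def]
  have hFX' : Ffun ε X' = t' ^ d / Real.sqrt (Real.log (3 + t')) := by
    unfold Ffun; rw [← hd_def, ← ht'_def]
  have hsqt1 : (1:ℝ) ≤ Real.sqrt (Real.log (3 + t)) := by
    rw [show (1:ℝ) = Real.sqrt 1 from (Real.sqrt_one).symm]
    apply Real.sqrt_le_sqrt
    rw [Real.le_log_iff_exp_le (by linarith : (0:ℝ) < 3 + t)]
    linarith [Real.exp_pos 1]
  have hFpos : 0 ≤ Ffun ε X := by
    rw [hFX]; positivity
  have hGle : Ffun ε X ≤ t ^ d := by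
    rw [hFX]; exact div_le_self (Real.rpow_nonneg htpos.le d) hsqt1
  have hLch : L < ch * Ffun ε X := by
    have h := Real.log_lt_log (Real.exp_pos _) hαlow
    rw [Real.log_exp, hlogα] at h
    linarith
  have hLt : L ≤ t ^ d := by
    have hq : ch * Ffun ε X ≤ ch * (t ^ d) := mul_le_mul_of_nonneg_left hGle hch0.le
    have hq2 : ch * (t ^ d) ≤ 1 * (t ^ d) :=
      mul_le_mul_of_nonneg_right (by linarith) (Real.rpow_nonneg htpos.le d)
    linarith
  have hLle_t : L ≤ t := by
    have h1 : t ^ d ≤ t ^ (1:ℝ) := Real.rpow_le_rpow_of_exponent_le hEt1 hd1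
    rw [Real.rpow_one] at h1
    linarith
  -- the common argument
  have main : ∀ s : ℝ, 0 ≤ s → s ≤ t / 2 → t - s ≤ t' →
      ∀ g : ℝ, Real.log α + g ≤ Real.log α' → c₀ * (2 * d * s * t ^ (d - 1)) ≤ g →
      α ≤ Real.exp (-c₀ * Ffun ε X) := by
    intro s hs0 hs2 htt' g hgain hkey
    have hlogα' : Real.log α' ≤ -c₀ * Ffun ε X' := by
      calc Real.log α' ≤ Real.log (Real.exp (-c₀ * Ffun ε X')) :=
            Real.log_le_log hα'0 hα'le
      _ = -c₀ * Ffun ε X' := Real.log_exp _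
    have hGd := Gdiff hd0 hd1 hs0 hs2 hE3
    have hts0 : (0:ℝ) < t - s := by linarith [Real.exp_pos 1]
    have hmlog : 1 / (2 * d) ≤ Real.log (3 + (t - s)) := by
      rw [Real.le_log_iff_exp_le (by linarith)]
      linarith [Real.exp_pos (1 / (2 * d))]
    have hmono := Gmono hd0 hts0 hmlog (by linarith : t - s ≤ t')
    rw [← Real.log_le_iff_le_exp hα0, hFX]
    rw [hFX'] at hlogα'
    have hA : c₀ * (t ^ d / Real.sqrt (Real.log (3 + t))
        - (t - s) ^ d / Real.sqrt (Real.log (3 + (t - s))))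
        ≤ c₀ * (2 * d * s * t ^ (d - 1)) := mul_le_mul_of_nonneg_left hGd hc₀0.le
    have hB : c₀ * ((t - s) ^ d / Real.sqrt (Real.log (3 + (t - s))))
        ≤ c₀ * (t' ^ d / Real.sqrt (Real.log (3 + t'))) :=
      mul_le_mul_of_nonneg_left hmono hc₀0.le
    linarith [hA, hB, hkey, hgain, hlogα']
  rcases hcase with ⟨hchα, hXX', hαα'⟩ | ⟨hαch, j, hXX', hαα'⟩ | ⟨hαch, hXX', hαα'⟩
  · -- case (*)
    have hLs : L ≤ Real.log (1 / ch) := by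
      have h := Real.log_lt_log hch0 hchα
      rw [hL_def, one_div, one_div, Real.log_inv, Real.log_inv]
      linarith
    have hChL0 : 0 ≤ Ch * L := by positivity
    have hsle : Ch * L ≤ s₀ := by
      rw [hs₀_def]; exact mul_le_mul_of_nonneg_left hLs hCh0.le
    refine main (Ch * L) hChL0 (by linarith) ?_ g₀ ?_ ?_
    · -- t - Ch*L ≤ t'
      have h1 : Real.log (α ^ Ch * X) ≤ t' := by
        rw [ht'_def]
        exact Real.log_le_log (by positivity) hXX'
      rw [Real.log_mul (by positivity : α ^ Ch ≠ 0) hXpos.ne', Real.log_rpow hα0,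
        hlogα, ← ht_def] at h1
      linarith
    · -- gain
      have hfac : α + α ^ Ch = α * (1 + α ^ (Ch - 1)) := by
        rw [show Ch = 1 + (Ch - 1) by ring]
        rw [Real.rpow_add hα0, Real.rpow_one]
        ring_nf
      have h2 : Real.log (α * (1 + α ^ (Ch - 1))) ≤ Real.log α' := by
        apply Real.log_le_log (by positivity)
        rw [← hfac]; exact hαα'
      rw [Real.log_mul hα0.ne' (by positivity)] at h2
      have h3 : g₀ ≤ Real.log (1 + α ^ (Ch - 1)) := by
        rw [hg₀_def]
        apply Real.log_le_log (by positivity)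
        have := Real.rpow_le_rpow hch0.le hchα.le (by linarith : (0:ℝ) ≤ Ch - 1)
        linarith
      linarith
    · -- key
      have htd1 : t ^ (d - 1) ≤ 1 :=
        Real.rpow_le_one_of_one_le_of_nonpos hEt1 (by linarith)
      have htd0 : (0:ℝ) ≤ t ^ (d - 1) := Real.rpow_nonneg htpos.le _
      have h1 : 2 * d * (Ch * L) * t ^ (d - 1) ≤ 2 * d * s₀ := by
        have h2 : 2 * d * (Ch * L) * t ^ (d - 1) ≤ 2 * d * (Ch * L) * 1 :=
          mul_le_mul_of_nonneg_left htd1 (by positivity)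
        have h2' : 2 * d * (Ch * L) ≤ 2 * d * s₀ :=
          mul_le_mul_of_nonneg_left hsle (by positivity)
        linarith
      have h3 : c₀ * (2 * d * (Ch * L) * t ^ (d - 1)) ≤ c₀ * (2 * d * s₀) :=
        mul_le_mul_of_nonneg_left h1 hc₀0.le
      linarith
  · -- case (2)
    have hL1 : (1:ℝ) ≤ L := by
      rw [hL_def, Real.le_log_iff_exp_le (by positivity)]
      have h1 : Real.exp 1 < 2.7182818286 := Real.exp_one_lt_d9
      have h2 : (10:ℝ) ≤ 1 / α := by
        rw [le_div_iff₀ hα0]; linarith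
      linarith
    have hlogt0 : 0 ≤ Real.log t := Real.log_nonneg hEt1
    have hlogL0 : 0 ≤ Real.log L := Real.log_nonneg hL1
    have hlogLt : Real.log L ≤ Real.log t := Real.log_le_log hL0 hLle_t
    have h2j : (2:ℝ) ^ j * α ≤ 1 := le_trans hαα' hα'1
    have hjL : (j:ℝ) * Real.log 2 ≤ L := by
      have h1 : (2:ℝ) ^ j ≤ 1 / α := by rw [le_div_iff₀ hα0]; exact h2j
      have h2 := Real.log_le_log (by positivity : (0:ℝ) < 2 ^ j) h1
      rw [Real.log_pow] at h2
      rw [hL_def]; exact_mod_cast h2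
    have hlog2 := Real.log_two_gt_d9
    have hj2L : (j:ℝ) ≤ 2 * L := by
      have h1 : (j:ℝ) * (1/2) ≤ (j:ℝ) * Real.log 2 :=
        mul_le_mul_of_nonneg_left (by linarith : (1:ℝ)/2 ≤ Real.log 2) (Nat.cast_nonneg j)
      linarith
    set s : ℝ := Ch * j * L ^ (3 + ε) * Real.log L ^ 2 with hs_def
    have hLpow0 : (0:ℝ) ≤ L ^ (3 + ε) := Real.rpow_nonneg hL0.le _
    have hs0 : 0 ≤ s := by
      rw [hs_def]
      exact mul_nonneg (mul_nonneg (by positivity) hLpow0) (sq_nonneg _)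
    have htt' : t - s ≤ t' := by
      have h1 : Real.log (X * Real.exp (-Ch * j * L ^ (3 + ε) * Real.log L ^ 2)) ≤ t' :=
        Real.log_le_log (by positivity) hXX'
      rw [Real.log_mul hXpos.ne' (Real.exp_ne_zero _), Real.log_exp, ← ht_def] at h1
      have h2 : -Ch * (j:ℝ) * L ^ (3 + ε) * Real.log L ^ 2 = -s := by rw [hs_def]; ring
      rw [h2] at h1; linarith
    have hL3 : L ^ (3 + ε) ≤ t ^ (d * (3 + ε)) := by
      calc L ^ (3 + ε) ≤ (t ^ d) ^ (3 + ε) :=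
            Real.rpow_le_rpow hL0.le hLt (by linarith)
      _ = t ^ (d * (3 + ε)) := by rw [← Real.rpow_mul htpos.le]
    have hsqlog : Real.log L ^ 2 ≤ Real.log t ^ 2 := pow_le_pow_left₀ hlogL0 hlogLt 2
    have htd0 : (0:ℝ) ≤ t ^ (d - 1) := Real.rpow_nonneg htpos.le _
    have hid1 : t ^ d * t ^ (d * (3 + ε)) * t ^ β = t := by
      rw [← Real.rpow_add htpos, ← Real.rpow_add htpos,
        show d + d * (3 + ε) + β = 1 by rw [hβ_def]; ring, Real.rpow_one]
    have hid2 : t ^ (d * (3 + ε)) * t ^ β * t ^ (d - 1) = 1 := by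
      rw [← Real.rpow_add htpos, ← Real.rpow_add htpos,
        show d * (3 + ε) + β + (d - 1) = 0 by rw [hβ_def]; ring, Real.rpow_zero]
    have hs_half : s ≤ t / 2 := by
      have mj : (j:ℝ) ≤ 2 * t ^ d := by linarith
      have q1 : Ch * (j:ℝ) ≤ Ch * (2 * t ^ d) := mul_le_mul_of_nonneg_left mj hCh0.le
      have q2 : Ch * (j:ℝ) * L ^ (3 + ε) ≤ Ch * (2 * t ^ d) * t ^ (d * (3 + ε)) :=
        mul_le_mul q1 hL3 hLpow0 (by positivity)
      have q3 : s ≤ Ch * (2 * t ^ d) * t ^ (d * (3 + ε)) * (Real.log t ^ 2) := by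
        rw [hs_def]
        exact mul_le_mul q2 hsqlog (sq_nonneg _) (by positivity)
      have q4 : Ch * (2 * t ^ d) * t ^ (d * (3 + ε)) * (Real.log t ^ 2)
          ≤ Ch * (2 * t ^ d) * t ^ (d * (3 + ε)) * (1 / (4 * Ch) * t ^ β) :=
        mul_le_mul_of_nonneg_left h5 (by positivity)
      have q5 : Ch * (2 * t ^ d) * t ^ (d * (3 + ε)) * (1 / (4 * Ch) * t ^ β) = t / 2 := by
        calc Ch * (2 * t ^ d) * t ^ (d * (3 + ε)) * (1 / (4 * Ch) * t ^ β)
            = (t ^ d * t ^ (d * (3 + ε)) * t ^ β) * (2 * Ch / (4 * Ch)) := by ring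
        _ = t * (2 * Ch / (4 * Ch)) := by rw [hid1]
        _ = t / 2 := by
              rw [show 2 * Ch / (4 * Ch) = 1 / 2 by
                rw [div_eq_iff (by positivity : (4:ℝ) * Ch ≠ 0)]; ring]
              ring
      linarith
    have hst : 2 * d * s * t ^ (d - 1) ≤ (j:ℝ) * Real.log 2 := by
      have q2 : Ch * (j:ℝ) * L ^ (3 + ε) ≤ Ch * j * t ^ (d * (3 + ε)) :=
        mul_le_mul_of_nonneg_left hL3 (by positivity)
      have q1 : s * t ^ (d - 1) ≤ Ch * j * t ^ (d * (3 + ε)) * Real.log t ^ 2 * t ^ (d - 1) := by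
        apply mul_le_mul_of_nonneg_right _ htd0
        rw [hs_def]
        exact mul_le_mul q2 hsqlog (sq_nonneg _) (by positivity)
      have q3 : Ch * (j:ℝ) * t ^ (d * (3 + ε)) * Real.log t ^ 2 * t ^ (d - 1)
          ≤ Ch * j * t ^ (d * (3 + ε)) * (Real.log 2 / (2 * d * Ch) * t ^ β) * t ^ (d - 1) := by
        apply mul_le_mul_of_nonneg_right _ htd0
        exact mul_le_mul_of_nonneg_left h4 (by positivity)
      have q4 : Ch * (j:ℝ) * t ^ (d * (3 + ε)) * (Real.log 2 / (2 * d * Ch) * t ^ β) * t ^ (d - 1)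
          = (j:ℝ) * (Real.log 2 / (2 * d)) * (t ^ (d * (3 + ε)) * t ^ β * t ^ (d - 1)) := by
        field_simp
      rw [q4, hid2, mul_one] at q3
      have q5 : 2 * d * (s * t ^ (d - 1)) ≤ 2 * d * ((j:ℝ) * (Real.log 2 / (2 * d))) :=
        mul_le_mul_of_nonneg_left (q1.trans q3) (by positivity)
      have q6 : 2 * d * ((j:ℝ) * (Real.log 2 / (2 * d))) = j * Real.log 2 := by
        field_simp
      calc 2 * d * s * t ^ (d - 1) = 2 * d * (s * t ^ (d - 1)) := by ring
      _ ≤ 2 * d * ((j:ℝ) * (Real.log 2 / (2 * d))) := q5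
      _ = (j:ℝ) * Real.log 2 := q6
    have hkey : c₀ * (2 * d * s * t ^ (d - 1)) ≤ (j:ℝ) * Real.log 2 := by
      have hpos : 0 ≤ 2 * d * s * t ^ (d - 1) :=
        mul_nonneg (mul_nonneg (by positivity) hs0) htd0
      have := mul_le_mul_of_nonneg_right hc₀1 hpos
      linarith
    have hgain : Real.log α + (j:ℝ) * Real.log 2 ≤ Real.log α' := by
      have h1 : Real.log (2 ^ j * α) ≤ Real.log α' := Real.log_le_log (by positivity) hαα'
      rw [Real.log_mul (by positivity) hα0.ne', Real.log_pow] at h1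
      linarith
    exact main s hs0 hs_half htt' ((j:ℝ) * Real.log 2) hgain hkey
  · -- case (3)
    have hL1 : (1:ℝ) ≤ L := by
      rw [hL_def, Real.le_log_iff_exp_le (by positivity)]
      have h1 : Real.exp 1 < 2.7182818286 := Real.exp_one_lt_d9
      have h2 : (10:ℝ) ≤ 1 / α := by
        rw [le_div_iff₀ hα0]; linarith
      linarith
    have hlogt0 : 0 ≤ Real.log t := Real.log_nonneg hEt1
    have hlogL0 : 0 ≤ Real.log L := Real.log_nonneg hL1
    have hlogLt : Real.log L ≤ Real.log t := Real.log_le_log hL0 hLle_t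
    have htd0 : (0:ℝ) ≤ t ^ (d - 1) := Real.rpow_nonneg htpos.le _
    set s : ℝ := Ch * Real.log L with hs_def
    have hs0 : 0 ≤ s := mul_nonneg hCh0.le hlogL0
    have htt' : t - s ≤ t' := by
      have h1 : Real.log (X * L ^ (-Ch)) ≤ t' := by
        apply Real.log_le_log _ hXX'
        exact mul_pos hXpos (Real.rpow_pos_of_pos hL0 _)
      rw [Real.log_mul hXpos.ne' (Real.rpow_pos_of_pos hL0 _).ne', Real.log_rpow hL0,
        ← ht_def] at h1
      rw [hs_def]; linarith
    have hs_half : s ≤ t / 2 := by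
      have h1 : Real.log L ≤ 1 / (2 * Ch) * t := hlogLt.trans h7
      have h2 : Ch * Real.log L ≤ Ch * (1 / (2 * Ch) * t) :=
        mul_le_mul_of_nonneg_left h1 hCh0.le
      have h3 : Ch * (1 / (2 * Ch) * t) = t / 2 := by field_simp
      rw [hs_def]; linarith
    set x : ℝ := ch * L ^ (-a) with hx_def
    have hLa0 : 0 < L ^ (-a) := Real.rpow_pos_of_pos hL0 _
    have hxpos : 0 < x := by rw [hx_def]; exact mul_pos hch0 hLa0
    have hx1 : x ≤ 1 := by
      have h1 : L ^ (-a) ≤ 1 := Real.rpow_le_one_of_one_le_of_nonpos hL1 (by linarith)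
      have h2 : ch * L ^ (-a) ≤ 1 * 1 :=
        mul_le_mul (by linarith) h1 hLa0.le (by norm_num)
      rw [hx_def]; linarith
    have hgain : Real.log α + x / 2 ≤ Real.log α' := by
      have h1 : Real.log (α * (1 + x)) ≤ Real.log α' := by
        apply Real.log_le_log (by positivity)
        rw [hx_def]; exact hαα'
      rw [Real.log_mul hα0.ne' (by positivity)] at h1
      have h2 := half_le_log_one_add hxpos.le hx1
      linarith
    have hkey : c₀ * (2 * d * s * t ^ (d - 1)) ≤ x / 2 := by
      have hLa : L ^ a ≤ t ^ (d * a) := by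
        calc L ^ a ≤ (t ^ d) ^ a := Real.rpow_le_rpow hL0.le hLt (by linarith)
        _ = t ^ (d * a) := by rw [← Real.rpow_mul htpos.le]
      have hinv : (t ^ (d * a))⁻¹ ≤ (L ^ a)⁻¹ :=
        inv_anti₀ (Real.rpow_pos_of_pos hL0 a) hLa
      have hq2 : t ^ d * t ^ (d - 1) = (t ^ (d * a))⁻¹ := by
        rw [← Real.rpow_add htpos, show d + (d - 1) = -(d * a) by linarith [hda],
          Real.rpow_neg htpos.le]
      have hq1 : Real.log L * t ^ (d - 1) ≤ ch / (4 * d * Ch) * t ^ d * t ^ (d - 1) :=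
        mul_le_mul_of_nonneg_right (hlogLt.trans h6) htd0
      have e2 : 2 * d * Ch * (ch / (4 * d * Ch) * t ^ d * t ^ (d - 1))
          = ch / 2 * (t ^ d * t ^ (d - 1)) := by field_simp; ring
      have e3 : ch / 2 * (t ^ (d * a))⁻¹ ≤ ch / 2 * (L ^ a)⁻¹ :=
        mul_le_mul_of_nonneg_left hinv (by positivity)
      have e4 : ch / 2 * (L ^ a)⁻¹ = x / 2 := by
        rw [hx_def, Real.rpow_neg hL0.le]; ring
      have e5 : 2 * d * Ch * (Real.log L * t ^ (d - 1))
          ≤ 2 * d * Ch * (ch / (4 * d * Ch) * t ^ d * t ^ (d - 1)) :=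
        mul_le_mul_of_nonneg_left hq1 (by positivity)
      have hfin : 2 * d * s * t ^ (d - 1) ≤ x / 2 := by
        calc 2 * d * s * t ^ (d - 1) = 2 * d * Ch * (Real.log L * t ^ (d - 1)) := by
              rw [hs_def]; ring
        _ ≤ 2 * d * Ch * (ch / (4 * d * Ch) * t ^ d * t ^ (d - 1)) := e5
        _ = ch / 2 * (t ^ d * t ^ (d - 1)) := e2
        _ = ch / 2 * (t ^ (d * a))⁻¹ := by rw [hq2]
        _ ≤ ch / 2 * (L ^ a)⁻¹ := e3
        _ = x / 2 := e4
      have hpos2 : 0 ≤ 2 * d * s * t ^ (d - 1) :=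
        mul_nonneg (mul_nonneg (by positivity) hs0) htd0
      have := mul_le_mul_of_nonneg_right hc₀1 hpos2
      linarith
    exact main s hs0 hs_half htt' (x / 2) hgain hkey
end

section
/- Let ℓ, q ∈ ℕ. Suppose A ⊆ ℕ satisfies (A − A) ∩ {h_ℓ(n) : n ∈ ℤ} ⊆ {0}. Let x ∈ ℤ and let A' ⊆ {y ∈ ℕ : x + λ(q)·y ∈ A}. Then (A' − A') ∩ {h_{qℓ}(n) : n ∈ ℤ} ⊆ {0}. -/
set_option linter.unusedVariables false

open scoped Classical

noncomputable section

/-- `e(t) = e^{2πit}`. -/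
def eC (t : ℝ) : ℂ := Complex.exp (2 * Real.pi * Complex.I * t)

/-- Distance from `x` to the nearest integer, `‖x‖_{ℝ/ℤ}`. -/
def distZ (x : ℝ) : ℝ := |x - round x|

/-- Evaluation of an integer polynomial at a `p`-adic integer. -/
def pEval (p : ℕ) [Fact p.Prime] (h : Polynomial ℤ) (z : ℤ_[p]) : ℤ_[p] :=
  Polynomial.aeval z h

/-- Multiplicity of `z` as a root of `h`, viewed over `ℤ_[p]`. -/
def pMult (p : ℕ) [Fact p.Prime] (h : Polynomial ℤ) (z : ℤ_[p]) : ℕ :=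
  (h.map (Int.castRingHom ℤ_[p])).rootMultiplicity z

/-- The congruence `a ≡ z (mod p^v)` in `ℤ_[p]`. -/
def pCong (p : ℕ) [Fact p.Prime] (v : ℕ) (a : ℤ) (z : ℤ_[p]) : Prop :=
  ((p : ℤ_[p]) ^ v) ∣ ((a : ℤ_[p]) - z)

/-- Real evaluation of an integer polynomial. -/
def evalR (P : Polynomial ℤ) (x : ℝ) : ℝ := Polynomial.aeval x P

end

/-! Writing `r_{qℓ} = r_ℓ + ℓc` (both residues approximate the same `p`-adic roots, the first one
to higher precision), the substitution `n ↦ c + qn` gives `λ(q) h_{qℓ}(n) = h_ℓ(c + qn)`.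
Hence if `a, b ∈ A'` and `a - b = h_{qℓ}(n)`, then `(x + λ(q)a) - (x + λ(q)b) = h_ℓ(c + qn)` is a
difference of elements of `A`, so it vanishes, and so does `a - b`. -/

lemma pos_of_map_mul_of_pos_of_prime {f : ℕ → ℕ} (h_one : f 1 = 1)
    (h_mul : ∀ m n : ℕ, f (m * n) = f m * f n) (h_prime : ∀ p : ℕ, p.Prime → 0 < f p)
    {n : ℕ} (hn : 0 < n) : 0 < f n := by
  induction n using induction_on_primes with
  | zero => exact absurd hn (lt_irrefl 0)
  | one => rw [h_one]; exact one_pos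
  | prime_mul p a hp ih =>
    rw [h_mul]
    exact Nat.mul_pos (h_prime p hp) (ih (Nat.pos_of_mul_pos_left hn))

namespace pCong

variable {p : ℕ} [Fact p.Prime] {v w : ℕ} {a b : ℤ} {z : ℤ_[p]}

lemma of_le (hvw : v ≤ w) (ha : pCong p w a z) : pCong p v a z :=
  (pow_dvd_pow _ hvw).trans ha

lemma pow_dvd_sub (ha : pCong p v a z) (hb : pCong p v b z) : (p : ℤ) ^ v ∣ a - b := by
  rw [← PadicInt.pow_p_dvd_int_iff]
  simpa using dvd_sub ha hb

end pCong

lemma natCast_dvd_sub_of_pCong (z : ∀ (p : ℕ) (hp : Fact p.Prime), @PadicInt p hp)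
    {ℓ m : ℕ} (hm : m ≠ 0) (hℓm : ℓ ∣ m) {a b : ℤ}
    (ha : ∀ (p : ℕ) (hp : Fact p.Prime), p ∣ ℓ → @pCong p hp (ℓ.factorization p) a (z p hp))
    (hb : ∀ (p : ℕ) (hp : Fact p.Prime), p ∣ m → @pCong p hp (m.factorization p) b (z p hp)) :
    (ℓ : ℤ) ∣ b - a := by
  have hℓ : ℓ ≠ 0 := ne_zero_of_dvd_ne_zero hm hℓm
  rw [Int.natCast_dvd, Nat.dvd_iff_prime_pow_dvd_dvd]
  intro p j hp hpj
  rcases Nat.eq_zero_or_pos j with rfl | hj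
  · simp
  have : Fact p.Prime := ⟨hp⟩
  have hpℓ : p ∣ ℓ := (dvd_pow_self p hj.ne').trans hpj
  have hjℓ : j ≤ ℓ.factorization p := (hp.pow_dvd_iff_le_factorization hℓ).mp hpj
  have hℓm' : ℓ.factorization p ≤ m.factorization p :=
    (Nat.factorization_le_iff_dvd hℓ hm).mpr hℓm p
  have hdvd : (p : ℤ) ^ ℓ.factorization p ∣ b - a :=
    ((hb p _ (hpℓ.trans hℓm)).of_le hℓm').pow_dvd_sub (ha p _ hpℓ)
  exact Int.natCast_dvd.mp (by exact_mod_cast (pow_dvd_pow (p : ℤ) hjℓ).trans hdvd)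

lemma lam_mul_eval_haux_mul {h : Polynomial ℤ} {lam : ℕ → ℕ} {rres : ℕ → ℤ}
    {haux : ℕ → Polynomial ℤ}
    (hauxDef : ∀ (ℓ : ℕ) (x : ℤ), (lam ℓ : ℤ) * (haux ℓ).eval x = h.eval (rres ℓ + ℓ * x))
    (hlamMul : ∀ m n : ℕ, lam (m * n) = lam m * lam n) {ℓ q : ℕ} (hℓ : lam ℓ ≠ 0) {c : ℤ}
    (hc : rres (q * ℓ) - rres ℓ = ℓ * c) (n : ℤ) :
    (lam q : ℤ) * (haux (q * ℓ)).eval n = (haux ℓ).eval (c + q * n) := by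
  have harg : rres ℓ + ℓ * (c + q * n) = rres (q * ℓ) + ((q * ℓ : ℕ) : ℤ) * n := by
    push_cast; linear_combination -hc
  apply mul_left_cancel₀ (Int.natCast_ne_zero.mpr hℓ)
  rw [hauxDef, harg, ← hauxDef, hlamMul]
  push_cast
  ring

theorem stmt6_general
    (h : Polynomial ℤ)
    (z : ∀ (p : ℕ) (hp : Fact p.Prime), @PadicInt p hp)
    (lam : ℕ → ℕ)
    (hlam1 : lam 1 = 1)
    (hlamMul : ∀ m n : ℕ, lam (m * n) = lam m * lam n)
    (hlamP : ∀ (p : ℕ) (hp : Fact p.Prime), lam p = p ^ @pMult p hp h (z p hp))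
    (rres : ℕ → ℤ)
    (hrCong : ∀ ℓ : ℕ, 0 < ℓ → ∀ (p : ℕ) (hp : Fact p.Prime), p ∣ ℓ →
      @pCong p hp (ℓ.factorization p) (rres ℓ) (z p hp))
    (haux : ℕ → Polynomial ℤ)
    (hauxDef : ∀ (ℓ : ℕ) (x : ℤ), (lam ℓ : ℤ) * (haux ℓ).eval x = h.eval (rres ℓ + ℓ * x))
    (ℓ q : ℕ) (hℓ : 0 < ℓ) (hq : 0 < q)
    (A : Set ℤ)
    (hAdiff : ∀ a ∈ A, ∀ b ∈ A, (∃ n : ℤ, (haux ℓ).eval n = a - b) → a - b = 0)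
    (x : ℤ) (A' : Set ℤ)
    (hA' : A' ⊆ {y : ℤ | 0 < y ∧ x + (lam q : ℤ) * y ∈ A}) :
    ∀ a ∈ A', ∀ b ∈ A', (∃ n : ℤ, (haux (q * ℓ)).eval n = a - b) → a - b = 0 := by
  rintro a ha b hb ⟨n, hn⟩
  have hlam_pos : ∀ {m : ℕ}, 0 < m → lam m ≠ 0 := fun hm =>
    (pos_of_map_mul_of_pos_of_prime hlam1 hlamMul
      (fun p hp => hlamP p ⟨hp⟩ ▸ pow_pos hp.pos _) hm).ne'
  have hqℓ : 0 < q * ℓ := Nat.mul_pos hq hℓ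
  obtain ⟨c, hc⟩ := natCast_dvd_sub_of_pCong z hqℓ.ne' (dvd_mul_left ℓ q)
    (hrCong ℓ hℓ) (hrCong (q * ℓ) hqℓ)
  have hdiff : (lam q : ℤ) * (a - b) = 0 := by
    have := hAdiff _ (hA' ha).2 _ (hA' hb).2
      ⟨c + q * n, by rw [← lam_mul_eval_haux_mul hauxDef hlamMul (hlam_pos hℓ) hc, hn]; ring⟩
    linear_combination this
  exact (mul_eq_zero.mp hdiff).resolve_left (Int.natCast_ne_zero.mpr (hlam_pos hq))

/-- inheritance property of auxiliary polynomials. If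
`(A - A) ∩ h_ℓ(ℤ) ⊆ {0}`, `x ∈ ℤ`, and `A' ⊆ {y ∈ ℕ : x + λ(q)y ∈ A}`, then
`(A' - A') ∩ h_{qℓ}(ℤ) ⊆ {0}`. -/
theorem stmt6
    (k : ℕ) (hk : 2 ≤ k)
    (h : Polynomial ℤ) (hdeg : h.natDegree = k) (hlead : 0 < h.leadingCoeff)
    (hint : ∀ q : ℕ, 0 < q → ∃ n : ℤ, (q : ℤ) ∣ h.eval n)
    (hposh : ∀ n : ℤ, 0 < n →
      0 < h.eval n ∧ 0 < h.derivative.eval n ∧ 0 < h.derivative.derivative.eval n)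
    (z : ∀ (p : ℕ) (hp : Fact p.Prime), @PadicInt p hp)
    (hz : ∀ (p : ℕ) (hp : Fact p.Prime), @pEval p hp h (z p hp) = 0)
    (lam : ℕ → ℕ)
    (hlam1 : lam 1 = 1)
    (hlamMul : ∀ m n : ℕ, lam (m * n) = lam m * lam n)
    (hlamP : ∀ (p : ℕ) (hp : Fact p.Prime), lam p = p ^ @pMult p hp h (z p hp))
    (rres : ℕ → ℤ)
    (hrRange : ∀ ℓ : ℕ, 0 < ℓ → -(ℓ : ℤ) < rres ℓ ∧ rres ℓ ≤ 0)
    (hrDvd : ∀ ℓ : ℕ, 0 < ℓ → (ℓ : ℤ) ∣ h.eval (rres ℓ))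
    (hrCong : ∀ ℓ : ℕ, 0 < ℓ → ∀ (p : ℕ) (hp : Fact p.Prime), p ∣ ℓ →
      @pCong p hp (ℓ.factorization p) (rres ℓ) (z p hp))
    (haux : ℕ → Polynomial ℤ)
    (hauxDef : ∀ (ℓ : ℕ) (x : ℤ), (lam ℓ : ℤ) * (haux ℓ).eval x = h.eval (rres ℓ + ℓ * x))
    (ℓ q : ℕ) (hℓ : 0 < ℓ) (hq : 0 < q)
    (A : Set ℤ) (hA : A ⊆ {n : ℤ | 0 < n})
    (hAdiff : ∀ a ∈ A, ∀ b ∈ A, (∃ n : ℤ, (haux ℓ).eval n = a - b) → a - b = 0)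
    (x : ℤ) (A' : Set ℤ)
    (hA' : A' ⊆ {y : ℤ | 0 < y ∧ x + (lam q : ℤ) * y ∈ A}) :
    ∀ a ∈ A', ∀ b ∈ A', (∃ n : ℤ, (haux (q * ℓ)).eval n = a - b) → a - b = 0 :=
  stmt6_general h z lam hlam1 hlamMul hlamP rres hrCong haux hauxDef ℓ q hℓ hq A hAdiff x A' hA'
end

section
/- Let Y ≥ 1 be a real number and let 𝒬 be a finite set of pairwise coprime positive integers such that all elements of 𝒬, with at most one exception, are of the form p^b for some prime p > Y and integer b ≥ 1. Let q ≥ 2 be an integer such that q ∣ ∏_{m∈S} m for some S ⊆ 𝒬, and set d = min{|S| : S ⊆ 𝒬 and q ∣ ∏_{m∈S} m}. Then q ≥ Y^{d−1}. -/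
/-!
Take `S ⊆ 𝒬` of minimal size `d` with `q ∣ ∏ S`. By minimality no `m ∈ S` is coprime to `q`, so
for every prime power `m = p ^ b ∈ S` we get `p ∣ gcd(q, m)`, hence `gcd(q, m) ≥ p > Y`. The
numbers `gcd(q, m)`, `m ∈ S`, are pairwise coprime divisors of `q`, so their product divides `q`;
leaving out the possible exception, this product is at least `Y ^ (d - 1)`.
-/

theorem Nat.prod_gcd_dvd_of_pairwise_coprime {ι : Type*} {s : Finset ι} {f : ι → ℕ}
    (hs : (s : Set ι).Pairwise fun i j => (f i).Coprime (f j)) (q : ℕ) : ∏ i ∈ s, q.gcd (f i) ∣ q :=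
  Finset.prod_dvd_of_isRelPrime
    (hs.mono' fun _ _ hab => Nat.coprime_iff_isRelPrime.mp (Nat.Coprime.gcd_both q q hab))
    fun _ _ => Nat.gcd_dvd_left _ _

theorem Nat.Prime.le_gcd_pow_of_not_coprime {p q b : ℕ} (hp : p.Prime) (hq : q ≠ 0)
    (h : ¬ q.Coprime (p ^ b)) : p ≤ q.gcd (p ^ b) := by
  have hb : b ≠ 0 := by
    rintro rfl
    exact h (Nat.coprime_one_right q)
  have hpq : p ∣ q := by
    by_contra hpq
    exact h ((hp.coprime_iff_not_dvd.mpr hpq).symm.pow_right b)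
  exact Nat.le_of_dvd (Nat.gcd_pos_of_pos_left _ (Nat.pos_of_ne_zero hq))
    (Nat.dvd_gcd hpq (dvd_pow_self p hb))

theorem Nat.Coprime.dvd_prod_erase {s : Finset ℕ} {q m : ℕ} (hqm : q.Coprime m) (hm : m ∈ s)
    (h : q ∣ ∏ n ∈ s, n) : q ∣ ∏ n ∈ s.erase m, n := by
  rw [← Finset.mul_prod_erase s (fun n => n) hm] at h
  exact hqm.dvd_of_dvd_mul_left h

theorem stmt18_general (Y : ℝ) (hY : 1 ≤ Y)
    (Q : Finset ℕ)
    (hcop : ∀ q ∈ Q, ∀ q' ∈ Q, q ≠ q' → Nat.Coprime q q')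
    (hexc : ∃ q₀ : ℕ, ∀ m ∈ Q, m ≠ q₀ →
      ∃ (p b : ℕ), p.Prime ∧ Y < (p : ℝ) ∧ 1 ≤ b ∧ m = p ^ b)
    (q : ℕ) (hq : 2 ≤ q) (hdvd : ∃ S ⊆ Q, q ∣ ∏ m ∈ S, m)
    (d : ℕ) (hd : d = sInf {n : ℕ | ∃ S ⊆ Q, S.card = n ∧ q ∣ ∏ m ∈ S, m}) :
    Y ^ (d - 1) ≤ (q : ℝ) := by
  obtain ⟨q₀, hq₀⟩ := hexc
  obtain ⟨S, hSQ, hScard, hSdvd⟩ : ∃ S ⊆ Q, S.card = d ∧ q ∣ ∏ m ∈ S, m := by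
    obtain ⟨S, hSQ, hS⟩ := hdvd
    exact hd ▸ Nat.sInf_mem (s := {n : ℕ | ∃ S ⊆ Q, S.card = n ∧ q ∣ ∏ m ∈ S, m})
      ⟨S.card, S, hSQ, rfl, hS⟩
  have hessential : ∀ m ∈ S, ¬ q.Coprime m := by
    intro m hm hqm
    have hle : d ≤ (S.erase m).card := hd ▸
      Nat.sInf_le ⟨_, (Finset.erase_subset m S).trans hSQ, rfl, hqm.dvd_prod_erase hm hSdvd⟩
    rw [Finset.card_erase_of_mem hm, hScard] at hle
    have := Finset.card_pos.mpr ⟨m, hm⟩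
    omega
  have hlarge : ∀ m ∈ S.erase q₀, Y ≤ q.gcd m := by
    intro m hm
    have hmS := Finset.mem_of_mem_erase hm
    obtain ⟨p, b, hp, hpY, -, rfl⟩ := hq₀ m (hSQ hmS) (Finset.ne_of_mem_erase hm)
    exact hpY.le.trans
      (by exact_mod_cast hp.le_gcd_pow_of_not_coprime (by omega) (hessential _ hmS))
  have hpairwise : ((S.erase q₀ : Finset ℕ) : Set ℕ).Pairwise Nat.Coprime :=
    fun a ha b hb hab => hcop a (hSQ (Finset.mem_of_mem_erase ha))
      b (hSQ (Finset.mem_of_mem_erase hb)) hab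
  calc Y ^ (d - 1) ≤ Y ^ (S.erase q₀).card :=
        pow_le_pow_right₀ hY (hScard ▸ Finset.pred_card_le_card_erase)
    _ ≤ ∏ m ∈ S.erase q₀, (q.gcd m : ℝ) := by
        simpa using Finset.prod_le_prod (fun _ _ => zero_le_one.trans hY) hlarge
    _ ≤ q := by
        exact_mod_cast Nat.le_of_dvd (by omega) (Nat.prod_gcd_dvd_of_pairwise_coprime hpairwise q)

/-- Let `Y ≥ 1` and let `𝒬` be a finite set of pairwise coprime
positive integers, all of which, with at most one exception, are powers `p^b` of
primes `p > Y` (with `b ≥ 1`). If `q ≥ 2` divides `∏_{m ∈ S} m` for some `S ⊆ 𝒬`,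
and `d` is the minimal cardinality of such an `S`, then `q ≥ Y^{d-1}`. -/
theorem stmt18 (Y : ℝ) (hY : 1 ≤ Y)
    (Q : Finset ℕ) (hpos : ∀ q ∈ Q, 0 < q)
    (hcop : ∀ q ∈ Q, ∀ q' ∈ Q, q ≠ q' → Nat.Coprime q q')
    (hexc : ∃ q₀ : ℕ, ∀ m ∈ Q, m ≠ q₀ →
      ∃ (p b : ℕ), p.Prime ∧ Y < (p : ℝ) ∧ 1 ≤ b ∧ m = p ^ b)
    (q : ℕ) (hq : 2 ≤ q) (hdvd : ∃ S ⊆ Q, q ∣ ∏ m ∈ S, m)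
    (d : ℕ) (hd : d = sInf {n : ℕ | ∃ S ⊆ Q, S.card = n ∧ q ∣ ∏ m ∈ S, m}) :
    Y ^ (d - 1) ≤ (q : ℝ) :=
  stmt18_general Y hY Q hcop hexc q hq hdvd d hd
end

section
/- Let 𝒬 be a finite set of pairwise coprime positive integers, let q ≥ 2 be an integer such that q ∣ ∏_{m∈S} m for some S ⊆ 𝒬, and set d = min{|S| : S ⊆ 𝒬 and q ∣ ∏_{m∈S} m}. Let a be an integer with 1 ≤ a < q and gcd(a, q) = 1. Then there exist a set S ⊆ 𝒬 with |S| = d and an integer b with 1 ≤ b < R_S := ∏_{m∈S} m such that a/q = b/R_S and m ∤ b for every m ∈ S. -/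
/-!
Take `S` of minimal size with `q ∣ R_S` and put `b = a R_S / q`. If some `m ∈ S` divided `b`,
cancelling `m` from `a R_S = b q` would give `q ∣ a R_{S \ {m}}`, hence `q ∣ R_{S \ {m}}` since
`gcd(a, q) = 1`, contradicting the minimality of `S`.
-/

lemma Nat.dvd_of_dvd_mul_div_of_coprime {a q m r : ℕ} (hm : 0 < m) (haq : a.Coprime q)
    (hq : q ∣ m * r) (hmb : m ∣ a * (m * r) / q) : q ∣ r := by
  obtain ⟨c, hc⟩ := hmb
  have hcq : m * (c * q) = m * (a * r) := by
    rw [← mul_assoc, ← hc, Nat.div_mul_cancel (hq.mul_left a)]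
    ring
  exact haq.symm.dvd_of_dvd_mul_left ⟨c, by rw [← Nat.eq_of_mul_eq_mul_left hm hcq, mul_comm]⟩

lemma Nat.not_dvd_mul_prod_div_of_minimal {Q S : Finset ℕ} {a q : ℕ} (hpos : ∀ m ∈ Q, 0 < m)
    (haq : a.Coprime q) (hSQ : S ⊆ Q)
    (hmin : ∀ T ⊆ Q, q ∣ ∏ i ∈ T, i → S.card ≤ T.card) (hqS : q ∣ ∏ i ∈ S, i) :
    ∀ m ∈ S, ¬ m ∣ a * (∏ i ∈ S, i) / q := by
  intro m hm hmb
  rw [← Finset.mul_prod_erase S (fun i => i) hm] at hqS hmb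
  have hq_erase := Nat.dvd_of_dvd_mul_div_of_coprime (hpos m (hSQ hm)) haq hqS hmb
  exact (Finset.card_erase_lt_of_mem hm).not_ge (hmin _ ((S.erase_subset m).trans hSQ) hq_erase)

lemma Nat.mul_div_lt_of_lt {a q R : ℕ} (haq : a < q) (hR : 0 < R) : a * R / q < R :=
  (Nat.div_lt_iff_lt_mul (by omega)).2 <| by
    rw [mul_comm R]
    exact Nat.mul_lt_mul_of_pos_right haq hR

theorem stmt19_general (Q : Finset ℕ) (hpos : ∀ q ∈ Q, 0 < q)
    (q : ℕ) (hdvd : ∃ S ⊆ Q, q ∣ ∏ m ∈ S, m)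
    (d : ℕ) (hd : d = sInf {n : ℕ | ∃ S ⊆ Q, S.card = n ∧ q ∣ ∏ m ∈ S, m})
    (a : ℕ) (ha1 : 1 ≤ a) (ha2 : a < q) (ha3 : Nat.gcd a q = 1) :
    ∃ S ⊆ Q, S.card = d ∧ ∃ b : ℕ, 1 ≤ b ∧ b < ∏ m ∈ S, m ∧
      a * (∏ m ∈ S, m) = b * q ∧ ∀ m ∈ S, ¬ m ∣ b := by
  obtain ⟨S, hSQ, hcard, hqS⟩ : d ∈ {n : ℕ | ∃ S ⊆ Q, S.card = n ∧ q ∣ ∏ m ∈ S, m} := by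
    obtain ⟨S, hSQ, hqS⟩ := hdvd
    exact hd ▸ Nat.sInf_mem ⟨S.card, S, hSQ, rfl, hqS⟩
  have hmin : ∀ T ⊆ Q, q ∣ ∏ m ∈ T, m → S.card ≤ T.card := fun T hTQ hqT =>
    hcard ▸ hd ▸ Nat.sInf_le ⟨T, hTQ, rfl, hqT⟩
  have hR : 0 < ∏ m ∈ S, m := Finset.prod_pos fun m hm => hpos m (hSQ hm)
  have hqR : q ≤ a * ∏ m ∈ S, m := (Nat.le_of_dvd hR hqS).trans (Nat.le_mul_of_pos_left _ ha1)
  refine ⟨S, hSQ, hcard, a * (∏ m ∈ S, m) / q, Nat.div_pos hqR (by omega),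
    Nat.mul_div_lt_of_lt ha2 hR, (Nat.div_mul_cancel (hqS.mul_left a)).symm,
    Nat.not_dvd_mul_prod_div_of_minimal hpos ha3 hSQ hmin hqS⟩

/-- Let `𝒬` be a finite set of pairwise coprime positive integers,
let `q ≥ 2` divide `∏_{m ∈ S} m` for some `S ⊆ 𝒬`, and let `d` be the minimal
cardinality of such an `S`. If `1 ≤ a < q` and `gcd(a,q) = 1`, then there exist
`S ⊆ 𝒬` with `|S| = d` and `1 ≤ b < R_S := ∏_{m ∈ S} m` such that `a/q = b/R_S`
and `m ∤ b` for every `m ∈ S`. -/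
theorem stmt19 (Q : Finset ℕ) (hpos : ∀ q ∈ Q, 0 < q)
    (hcop : ∀ q ∈ Q, ∀ q' ∈ Q, q ≠ q' → Nat.Coprime q q')
    (q : ℕ) (hq : 2 ≤ q) (hdvd : ∃ S ⊆ Q, q ∣ ∏ m ∈ S, m)
    (d : ℕ) (hd : d = sInf {n : ℕ | ∃ S ⊆ Q, S.card = n ∧ q ∣ ∏ m ∈ S, m})
    (a : ℕ) (ha1 : 1 ≤ a) (ha2 : a < q) (ha3 : Nat.gcd a q = 1) :
    ∃ S ⊆ Q, S.card = d ∧ ∃ b : ℕ, 1 ≤ b ∧ b < ∏ m ∈ S, m ∧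
      a * (∏ m ∈ S, m) = b * q ∧ ∀ m ∈ S, ¬ m ∣ b :=
  stmt19_general Q hpos q hdvd d hd a ha1 ha2 ha3
end
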